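/- arXiv:2102.04123 — 2 statements merged into one kernel-verified Lean document; each statement's English description precedes it below -/
import Mathlib

section
/- Let r < P, and let B be a real P×r matrix and B^c a real P×(P−r) matrix such that the P×P matrix (B, B^c) is orthogonal, i.e., BᵀB = I_r, (B^c)ᵀB^c = I_{P−r}, and BᵀB^c = 0. Then for every real (P−r)×r matrix P0, the matrix B̂ := (B + B^c·P0)(I_r + P0ᵀP0)^{−1/2} satisfies B̂ᵀB̂ = I_r and ‖B̂ − B‖ ≤ 2‖P0‖. -/
open Matrix

/-- The eigenvalues of a real symmetric matrix, listed in **decreasing** order (with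
multiplicity): `eigsDesc hA i` is the `(i+1)`-th largest eigenvalue of `A`. -/
noncomputable def eigsDesc {n : ℕ} {A : Matrix (Fin n) (Fin n) ℝ} (hA : A.IsHermitian) :
    Fin n → ℝ :=
  fun i => hA.eigenvalues (Tuple.sort hA.eigenvalues i.rev)

lemma isHermitian_mul_transpose_self {m n : ℕ} (C : Matrix (Fin m) (Fin n) ℝ) :
    (C * Cᵀ).IsHermitian := by
  simpa [Matrix.conjTranspose_eq_transpose_of_trivial] using
    Matrix.isHermitian_mul_conjTranspose_self C

/-- The operator (spectral) norm of a real matrix `C`: the square root of the largest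
eigenvalue of `C * Cᵀ`. -/
noncomputable def specNorm {m n : ℕ} (C : Matrix (Fin m) (Fin n) ℝ) : ℝ :=
  Real.sqrt (⨆ i, (isHermitian_mul_transpose_self C).eigenvalues i)

lemma isHermitian_transpose_mul_mul {m n : ℕ} {A : Matrix (Fin m) (Fin m) ℝ}
    (hA : A.IsHermitian) (B : Matrix (Fin m) (Fin n) ℝ) : (Bᵀ * A * B).IsHermitian := by
  simpa [Matrix.conjTranspose_eq_transpose_of_trivial] using
    Matrix.isHermitian_conjTranspose_mul_mul B hA

lemma isHermitian_mul_mul_transpose {m n : ℕ} {A : Matrix (Fin m) (Fin m) ℝ}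
    (hA : A.IsHermitian) (B : Matrix (Fin n) (Fin m) ℝ) : (B * A * Bᵀ).IsHermitian := by
  simpa [Matrix.conjTranspose_eq_transpose_of_trivial] using
    Matrix.isHermitian_mul_mul_conjTranspose B hA

lemma posSemidef_one_add_transpose_mul {m n : ℕ} (P : Matrix (Fin m) (Fin n) ℝ) :
    ((1 : Matrix (Fin n) (Fin n) ℝ) + Pᵀ * P).PosSemidef := by
  have h := (Matrix.PosSemidef.one (n := Fin n) (R := ℝ)).add
    (Matrix.posSemidef_conjTranspose_mul_self P)
  simpa [Matrix.conjTranspose_eq_transpose_of_trivial] using h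

open scoped ComplexOrder in
/-- The positive semidefinite square root of a positive semidefinite matrix (the definition
`Matrix.PosSemidef.sqrt` of the older Mathlib, since removed). -/
noncomputable def Matrix.PosSemidef.sqrt {n : Type*} [Fintype n] [DecidableEq n] {𝕜 : Type*}
    [RCLike 𝕜] {A : Matrix n n 𝕜} (hA : A.PosSemidef) : Matrix n n 𝕜 :=
  (hA.1.eigenvectorUnitary : Matrix n n 𝕜) * diagonal ((↑) ∘ (√·) ∘ hA.1.eigenvalues) *
    (star (hA.1.eigenvectorUnitary : Matrix n n 𝕜))

/-! Put `S = 1 + P0ᵀ P0`. Orthonormality of `(B, Bᶜ)` gives `(B + Bᶜ P0)ᵀ (B + Bᶜ P0) = S`, and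
`S^{1/2}` is symmetric, so `B̂ᵀ B̂ = S^{-1/2} S S^{-1/2} = 1`. For the bound, write
`B̂ - B = B (S^{-1/2} - 1) + Bᶜ P0 S^{-1/2}`; since `B` and `Bᶜ` are isometries,
`‖B̂ - B‖ ≤ ‖S^{-1/2} - 1‖ + ‖P0‖ ‖S^{-1/2}‖`. By the functional calculus both norms are
suprema over the spectrum of `S`, which lies in `[1, 1 + ‖P0‖²]`, and there `(√x)⁻¹ ≤ 1` and
`1 - (√x)⁻¹ ≤ √x - 1 ≤ ‖P0‖`. -/

open scoped Matrix.Norms.L2Operator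

namespace Matrix

section Hermitian

open scoped ComplexOrder

variable {n : Type*} [Fintype n] [DecidableEq n] {𝕜 : Type*} [RCLike 𝕜] {A : Matrix n n 𝕜}

lemma IsHermitian.norm_cfc_eq (hA : A.IsHermitian) (f : ℝ → ℝ) :
    ‖cfc f A‖ = ‖f ∘ hA.eigenvalues‖ := by
  rw [hA.cfc_eq, IsHermitian.cfc, Unitary.conjStarAlgAut_apply, ← Unitary.coe_star,
    CStarRing.norm_mul_coe_unitary, CStarRing.norm_coe_unitary_mul, l2_opNorm_diagonal]
  simp [Pi.norm_def, Function.comp_def]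

lemma IsHermitian.norm_cfc_le (hA : A.IsHermitian) {f : ℝ → ℝ} {c : ℝ} (hc : 0 ≤ c)
    (hf : ∀ x ∈ spectrum ℝ A, |f x| ≤ c) : ‖cfc f A‖ ≤ c := by
  rw [hA.norm_cfc_eq, pi_norm_le_iff_of_nonneg hc]
  exact fun i => hf _ (hA.eigenvalues_mem_spectrum_real i)

lemma IsHermitian.cfc_sub_one (hA : A.IsHermitian) (f : ℝ → ℝ) :
    cfc f A - 1 = cfc (fun x => f x - 1) A := by
  rw [cfc_sub f (fun _ => 1) A (A.finite_real_spectrum.continuousOn _)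
    (A.finite_real_spectrum.continuousOn _), cfc_const_one ℝ A hA.isSelfAdjoint]

lemma IsHermitian.norm_eq_norm_eigenvalues (hA : A.IsHermitian) : ‖A‖ = ‖hA.eigenvalues‖ := by
  simpa [cfc_id ℝ A hA.isSelfAdjoint] using hA.norm_cfc_eq id

lemma IsHermitian.eigenvalues_le_norm (hA : A.IsHermitian) (i : n) : hA.eigenvalues i ≤ ‖A‖ :=
  calc hA.eigenvalues i ≤ ‖hA.eigenvalues i‖ := Real.le_norm_self _
    _ ≤ ‖A‖ := hA.norm_eq_norm_eigenvalues ▸ norm_le_pi_norm hA.eigenvalues i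

lemma PosSemidef.iSup_eigenvalues_eq_norm (hA : A.PosSemidef) : ⨆ i, hA.1.eigenvalues i = ‖A‖ := by
  refine le_antisymm (Real.iSup_le hA.1.eigenvalues_le_norm (norm_nonneg A)) ?_
  rw [hA.1.norm_eq_norm_eigenvalues,
    pi_norm_le_iff_of_nonneg (Real.iSup_nonneg fun i => hA.eigenvalues_nonneg i)]
  intro i
  rw [Real.norm_of_nonneg (hA.eigenvalues_nonneg i)]
  exact le_ciSup (Finite.bddAbove_range _) i

lemma PosSemidef.spectrum_nonneg (hA : A.PosSemidef) : ∀ x ∈ spectrum ℝ A, 0 ≤ x := by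
  rw [hA.1.spectrum_real_eq_range_eigenvalues]
  rintro - ⟨i, rfl⟩
  exact hA.eigenvalues_nonneg i

lemma PosSemidef.spectrum_one_add_subset (hA : A.PosSemidef) :
    spectrum ℝ (1 + A) ⊆ Set.Icc 1 (1 + ‖A‖) := by
  rw [← map_one (algebraMap ℝ (Matrix n n 𝕜)), ← spectrum.singleton_add_eq, Set.singleton_add,
    hA.1.spectrum_real_eq_range_eigenvalues]
  rintro - ⟨-, ⟨i, rfl⟩, rfl⟩
  exact ⟨by simpa using hA.eigenvalues_nonneg i, by simpa using hA.1.eigenvalues_le_norm i⟩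

lemma PosSemidef.sqrt_eq_cfc (hA : A.PosSemidef) : hA.sqrt = cfc Real.sqrt A := by
  rw [hA.1.cfc_eq, IsHermitian.cfc, Unitary.conjStarAlgAut_apply]
  rfl

lemma PosSemidef.isHermitian_sqrt (hA : A.PosSemidef) : hA.sqrt.IsHermitian :=
  hA.sqrt_eq_cfc ▸ cfc_predicate Real.sqrt A

lemma PosSemidef.sqrt_mul_self (hA : A.PosSemidef) : hA.sqrt * hA.sqrt = A := by
  rw [hA.sqrt_eq_cfc, ← cfc_mul Real.sqrt Real.sqrt A]
  conv_rhs => rw [← cfc_id' ℝ A hA.1.isSelfAdjoint]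
  exact cfc_congr fun x hx => Real.mul_self_sqrt (hA.spectrum_nonneg x hx)

lemma PosSemidef.sqrt_mul_cfc_inv_sqrt (hA : A.PosSemidef) (hpos : ∀ x ∈ spectrum ℝ A, 0 < x) :
    hA.sqrt * cfc (fun x => (√x)⁻¹) A = 1 := by
  rw [hA.sqrt_eq_cfc, ← cfc_mul Real.sqrt _ A (hg := A.finite_real_spectrum.continuousOn _),
    ← cfc_one ℝ A hA.1.isSelfAdjoint]
  exact cfc_congr fun x hx => mul_inv_cancel₀ (Real.sqrt_pos.mpr (hpos x hx)).ne'

lemma PosSemidef.inv_sqrt_eq_cfc (hA : A.PosSemidef) (hpos : ∀ x ∈ spectrum ℝ A, 0 < x) :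
    hA.sqrt⁻¹ = cfc (fun x => (√x)⁻¹) A :=
  inv_eq_right_inv (hA.sqrt_mul_cfc_inv_sqrt hpos)

end Hermitian

lemma spectrum_one_add_transpose_mul_subset {m n : Type*} [Fintype m] [Fintype n]
    [DecidableEq n] (P : Matrix m n ℝ) : spectrum ℝ (1 + Pᵀ * P) ⊆ Set.Icc 1 (1 + ‖P‖ ^ 2) := by
  have hP : (Pᵀ * P).PosSemidef := by simpa using posSemidef_conjTranspose_mul_self P
  simpa [sq] using l2_opNorm_conjTranspose_mul_self P ▸ hP.spectrum_one_add_subset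

section Frame

variable {m n k : Type*} {𝕜 : Type*} [RCLike 𝕜]

lemma norm_mul_of_conjTranspose_mul_self_eq_one [Fintype m] [Fintype n] [Fintype k]
    [DecidableEq n] [DecidableEq k] {B : Matrix m n 𝕜} (hB : Bᴴ * B = 1) (X : Matrix n k 𝕜) :
    ‖B * X‖ = ‖X‖ := by
  have h : ‖B * X‖ * ‖B * X‖ = ‖X‖ * ‖X‖ := by
    rw [← l2_opNorm_conjTranspose_mul_self, ← l2_opNorm_conjTranspose_mul_self, conjTranspose_mul,
      Matrix.mul_assoc, ← Matrix.mul_assoc Bᴴ, hB, Matrix.one_mul]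
  exact mul_self_inj (norm_nonneg _) (norm_nonneg _) |>.mp h

lemma norm_add_mul_mul_sub_le [Fintype m] [Fintype n] [Fintype k] [DecidableEq n]
    [DecidableEq k] {B : Matrix m n 𝕜} {Bc : Matrix m k 𝕜} (hB : Bᴴ * B = 1)
    (hBc : Bcᴴ * Bc = 1) (X : Matrix k n 𝕜) {Y : Matrix n n 𝕜} (hY : ‖Y‖ ≤ 1)
    (hY1 : ‖Y - 1‖ ≤ ‖X‖) : ‖(B + Bc * X) * Y - B‖ ≤ 2 * ‖X‖ :=
  calc ‖(B + Bc * X) * Y - B‖ = ‖B * (Y - 1) + Bc * (X * Y)‖ := by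
        rw [Matrix.mul_sub, Matrix.mul_one, Matrix.add_mul, Matrix.mul_assoc]; abel_nf
    _ ≤ ‖Y - 1‖ + ‖X * Y‖ := by
        rw [← norm_mul_of_conjTranspose_mul_self_eq_one hB (Y - 1),
          ← norm_mul_of_conjTranspose_mul_self_eq_one hBc (X * Y)]
        exact norm_add_le _ _
    _ ≤ ‖X‖ + ‖X‖ * 1 := by
        gcongr
        exact (l2_opNorm_mul X Y).trans (by gcongr)
    _ = 2 * ‖X‖ := by ring

lemma conjTranspose_add_mul_mul_self [Fintype m] [Fintype k] [DecidableEq n] [DecidableEq k]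
    {B : Matrix m n 𝕜} {Bc : Matrix m k 𝕜} (hB : Bᴴ * B = 1)
    (hBc : Bcᴴ * Bc = 1) (hBBc : Bᴴ * Bc = 0) (X : Matrix k n 𝕜) :
    (B + Bc * X)ᴴ * (B + Bc * X) = 1 + Xᴴ * X := by
  have hBcB : Bcᴴ * B = 0 := by simpa using congrArg conjTranspose hBBc
  simp only [conjTranspose_add, conjTranspose_mul, Matrix.add_mul, Matrix.mul_add,
    Matrix.mul_assoc, ← Matrix.mul_assoc Bᴴ, ← Matrix.mul_assoc Bcᴴ, hB, hBc, hBBc, hBcB,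
    Matrix.zero_mul, Matrix.mul_zero, Matrix.one_mul, add_zero, zero_add]

lemma conjTranspose_mul_self_mul_inv_of_eq_mul_self [Fintype m] [Fintype n] [DecidableEq n]
    {C : Matrix m n 𝕜} {T : Matrix n n 𝕜} (hT : T.IsHermitian) (hCT : Cᴴ * C = T * T)
    (hinv : T * T⁻¹ = 1) :
    (C * T⁻¹)ᴴ * (C * T⁻¹) = 1 := by
  have hinv' : T⁻¹ * T = 1 := mul_eq_one_comm.mp hinv
  calc (C * T⁻¹)ᴴ * (C * T⁻¹) = T⁻¹ * (Cᴴ * C) * T⁻¹ := by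
        rw [conjTranspose_mul, conjTranspose_nonsing_inv, hT.eq]; simp only [Matrix.mul_assoc]
    _ = (T⁻¹ * T) * (T * T⁻¹) := by rw [hCT]; simp only [Matrix.mul_assoc]
    _ = 1 := by rw [hinv, hinv', Matrix.one_mul]

end Frame

end Matrix

lemma specNorm_eq_norm {m n : ℕ} (C : Matrix (Fin m) (Fin n) ℝ) : specNorm C = ‖C‖ := by
  have hC : (C * Cᵀ).PosSemidef := by
    simpa using posSemidef_self_mul_conjTranspose C
  have hnorm : ‖C * Cᵀ‖ = ‖C‖ ^ 2 := by
    rw [sq, ← l2_opNorm_conjTranspose C, ← l2_opNorm_conjTranspose_mul_self,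
      conjTranspose_conjTranspose, conjTranspose_eq_transpose_of_trivial]
  rw [specNorm, hC.iSup_eigenvalues_eq_norm, hnorm, Real.sqrt_sq (norm_nonneg C)]

lemma abs_inv_sqrt_le_one {x : ℝ} (hx : 1 ≤ x) : |(√x)⁻¹| ≤ 1 := by
  rw [abs_inv, abs_of_nonneg (Real.sqrt_nonneg x)]
  exact inv_le_one_of_one_le₀ (Real.one_le_sqrt.mpr hx)

lemma abs_inv_sqrt_sub_one_le {x p : ℝ} (hp : 0 ≤ p) (hx : x ∈ Set.Icc 1 (1 + p ^ 2)) :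
    |(√x)⁻¹ - 1| ≤ p := by
  have hs : 1 ≤ √x := Real.one_le_sqrt.mpr hx.1
  have hsp : √x ≤ 1 + p := Real.sqrt_le_iff.mpr ⟨by linarith, by nlinarith [hx.2]⟩
  rw [abs_sub_comm, abs_of_nonneg (sub_nonneg.mpr (inv_le_one_of_one_le₀ hs))]
  calc 1 - (√x)⁻¹ = (√x - 1) / √x := by field_simp
    _ ≤ √x - 1 := div_le_self (by linarith) hs
    _ ≤ p := by linarith

theorem rotated_orthonormal_frame_close_general {P r : ℕ}
    (B : Matrix (Fin P) (Fin r) ℝ) (Bc : Matrix (Fin P) (Fin (P - r)) ℝ)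
    (hB : Bᵀ * B = 1) (hBc : Bcᵀ * Bc = 1) (hBBc : Bᵀ * Bc = 0) :
    ∀ P0 : Matrix (Fin (P - r)) (Fin r) ℝ,
      ((B + Bc * P0) * ((posSemidef_one_add_transpose_mul P0).sqrt)⁻¹)ᵀ *
          ((B + Bc * P0) * ((posSemidef_one_add_transpose_mul P0).sqrt)⁻¹) = 1 ∧
      specNorm ((B + Bc * P0) * ((posSemidef_one_add_transpose_mul P0).sqrt)⁻¹ - B) ≤
        2 * specNorm P0 := by
  intro P0
  set hS := posSemidef_one_add_transpose_mul P0
  have hspec := spectrum_one_add_transpose_mul_subset P0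
  have hpos : ∀ x ∈ spectrum ℝ (1 + P0ᵀ * P0), 0 < x := fun x hx =>
    one_pos.trans_le (hspec hx).1
  have hinv := hS.inv_sqrt_eq_cfc hpos
  refine ⟨conjTranspose_mul_self_mul_inv_of_eq_mul_self hS.isHermitian_sqrt ?_ ?_, ?_⟩
  · rw [hS.sqrt_mul_self]
    exact conjTranspose_add_mul_mul_self hB hBc hBBc P0
  · rw [hinv]
    exact hS.sqrt_mul_cfc_inv_sqrt hpos
  · rw [specNorm_eq_norm, specNorm_eq_norm]
    refine norm_add_mul_mul_sub_le hB hBc P0 ?_ ?_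
    · rw [hinv]
      exact hS.1.norm_cfc_le zero_le_one fun x hx => abs_inv_sqrt_le_one (hspec hx).1
    · rw [hinv, hS.1.cfc_sub_one]
      exact hS.1.norm_cfc_le (norm_nonneg P0) fun x hx =>
        abs_inv_sqrt_sub_one_le (norm_nonneg P0) (hspec hx)

/-- Let the `P × P` matrix `(B, Bᶜ)` be orthogonal, i.e. `Bᵀ B = I_r`,
`(Bᶜ)ᵀ Bᶜ = I_{P−r}` and `Bᵀ Bᶜ = 0`. Then for every `(P−r) × r` matrix `P0`, the
matrix `B̂ = (B + Bᶜ P0)(I_r + P0ᵀ P0)^{−1/2}` has orthonormal columns and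
`‖B̂ − B‖ ≤ 2 ‖P0‖`. -/
theorem rotated_orthonormal_frame_close {P r : ℕ} (hr : r < P)
    (B : Matrix (Fin P) (Fin r) ℝ) (Bc : Matrix (Fin P) (Fin (P - r)) ℝ)
    (hB : Bᵀ * B = 1) (hBc : Bcᵀ * Bc = 1) (hBBc : Bᵀ * Bc = 0) :
    ∀ P0 : Matrix (Fin (P - r)) (Fin r) ℝ,
      ((B + Bc * P0) * ((posSemidef_one_add_transpose_mul P0).sqrt)⁻¹)ᵀ *
          ((B + Bc * P0) * ((posSemidef_one_add_transpose_mul P0).sqrt)⁻¹) = 1 ∧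
      specNorm ((B + Bc * P0) * ((posSemidef_one_add_transpose_mul P0).sqrt)⁻¹ - B) ≤
        2 * specNorm P0 :=
  rotated_orthonormal_frame_close_general B Bc hB hBc hBBc
end

section
/- Let M1 be a real r1×n matrix and M2 a real r2×n matrix, and let M be the (r1+r2)×(r1+r2) real symmetric block matrix M = [[M1 M1ᵀ, M1 M2ᵀ], [M2 M1ᵀ, M2 M2ᵀ]]. If λ_{r1}(M1 M1ᵀ) > λ_1(M2 M2ᵀ), then for every j with 1 ≤ j ≤ r2: λ_j(M2 M2ᵀ) − λ_1(M1 M2ᵀ M2 M1ᵀ) / (λ_{r1}(M1 M1ᵀ) − λ_j(M2 M2ᵀ)) ≤ λ_{r1+j}(M) ≤ λ_j(M2 M2ᵀ). -/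
/-!
Both bounds come from the Courant–Fischer characterisation of `λ_k`, tested on subspaces of
`ℝ^r1 ⊕ ℝ^r2` built from eigenvectors of `D = M2 M2ᵀ`. For the upper bound take `0 ⊕ E` with `E`
spanned by eigenvectors for `λ_j(D), …, λ_r2(D)`: it has dimension `r2 - j + 1`, and on it the
quadratic form of `M` is that of `D`, at most `λ_j(D)`. For the lower bound take `ℝ^r1 ⊕ F` with
`F` spanned by eigenvectors for `λ_1(D), …, λ_j(D)`, of dimension `r1 + j`. Writing
`α = λ_r1(M1 M1ᵀ)`, `μ = λ_j(D)`, `B = M1 M2ᵀ` and `β = λ_1(B Bᵀ)`, a vector `x = (u, y)` there has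
`xᵀ M x ≥ α |u|² + 2 uᵀ B y + μ |y|²` and `|uᵀ B y| ≤ √β |u| |y|`; the AM–GM inequality
`2 √β |u| |y| ≤ (α - μ) |u|² + β / (α - μ) |y|²` turns this into `xᵀ M x ≥ (μ - β / (α - μ)) |x|²`.
-/

open Matrix

theorem two_mul_abs_le_add_of_sq_le_mul {c x y : ℝ} (hx : 0 ≤ x) (hy : 0 ≤ y)
    (h : c ^ 2 ≤ x * y) : 2 * |c| ≤ x + y := by
  nlinarith [sq_abs c, sq_nonneg (x - y), abs_nonneg c]

section DotProductSelf

variable {n R : Type*} [Fintype n] [Ring R] [LinearOrder R] [IsStrictOrderedRing R]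

theorem dotProduct_self_nonneg (x : n → R) : 0 ≤ x ⬝ᵥ x :=
  Finset.sum_nonneg fun i _ => mul_self_nonneg (x i)

theorem dotProduct_self_pos {x : n → R} (hx : x ≠ 0) : 0 < x ⬝ᵥ x :=
  (dotProduct_self_nonneg x).lt_of_ne' (dotProduct_self_eq_zero.not.mpr hx)

end DotProductSelf

theorem Submodule.exists_mem_inf_ne_zero_of_finrank_lt {K E : Type*} [DivisionRing K]
    [AddCommGroup E] [Module K E] [FiniteDimensional K E] {V W : Submodule K E}
    (h : Module.finrank K E < Module.finrank K V + Module.finrank K W) :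
    ∃ x ∈ V, x ∈ W ∧ x ≠ 0 := by
  by_contra! hVW
  exact h.not_ge (Submodule.finrank_add_finrank_le_of_disjoint (Submodule.disjoint_def.mpr hVW))

namespace OrthonormalBasis

variable {ι n : Type*} [Fintype ι] [Fintype n] (b : OrthonormalBasis ι ℝ (EuclideanSpace ℝ n))
  {A : Matrix n n ℝ} {μ : ι → ℝ}

theorem eq_sum_dotProduct_smul (x : n → ℝ) : x = ∑ i, (⇑(b i) ⬝ᵥ x) • ⇑(b i) := by
  have := congrArg WithLp.ofLp (b.sum_repr' (WithLp.toLp 2 x))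
  simpa [EuclideanSpace.inner_eq_star_dotProduct, dotProduct_comm] using this.symm

theorem dotProduct_mulVec_eq_sum (hb : ∀ i, A *ᵥ ⇑(b i) = μ i • ⇑(b i)) (x : n → ℝ) :
    x ⬝ᵥ A *ᵥ x = ∑ i, μ i * (⇑(b i) ⬝ᵥ x) ^ 2 := by
  conv_lhs => enter [2, 2]; rw [b.eq_sum_dotProduct_smul x]
  simp only [mulVec_sum, mulVec_smul, hb, dotProduct_sum, dotProduct_smul, smul_eq_mul]
  exact Finset.sum_congr rfl fun i _ => by rw [dotProduct_comm]; ring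

theorem dotProduct_mulVec_le (hb : ∀ i, A *ᵥ ⇑(b i) = μ i • ⇑(b i)) {t : ℝ} {x : n → ℝ}
    (ht : ∀ i, ⇑(b i) ⬝ᵥ x ≠ 0 → μ i ≤ t) : x ⬝ᵥ A *ᵥ x ≤ t * (x ⬝ᵥ x) := by
  classical
  have hself := b.dotProduct_mulVec_eq_sum (A := 1) (μ := 1) (by simp) x
  rw [one_mulVec] at hself
  rw [b.dotProduct_mulVec_eq_sum hb, hself, Finset.mul_sum]
  refine Finset.sum_le_sum fun i _ => ?_
  by_cases hi : ⇑(b i) ⬝ᵥ x = 0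
  · simp [hi]
  · simpa using mul_le_mul_of_nonneg_right (ht i hi) (sq_nonneg (⇑(b i) ⬝ᵥ x))

theorem le_dotProduct_mulVec (hb : ∀ i, A *ᵥ ⇑(b i) = μ i • ⇑(b i)) {t : ℝ} {x : n → ℝ}
    (ht : ∀ i, ⇑(b i) ⬝ᵥ x ≠ 0 → t ≤ μ i) : t * (x ⬝ᵥ x) ≤ x ⬝ᵥ A *ᵥ x := by
  have := b.dotProduct_mulVec_le (A := -A) (μ := -μ) (t := -t) (by simp [neg_mulVec, hb])
    fun i hi => neg_le_neg (ht i hi)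
  simpa [neg_mulVec] using this

theorem dotProduct_eq_zero_of_mem_span {s : Set ι} {i : ι} (hi : i ∉ s) {x : n → ℝ}
    (hx : x ∈ Submodule.span ℝ ((fun j => ⇑(b j)) '' s)) : ⇑(b i) ⬝ᵥ x = 0 := by
  classical
  refine (Submodule.span_le (p := LinearMap.ker (dotProductBilin ℝ ℝ ⇑(b i)))).mpr ?_ hx
  rintro _ ⟨j, hj, rfl⟩
  have := b.orthonormal.2 (show i ≠ j by rintro rfl; exact hi hj)
  simpa [EuclideanSpace.inner_eq_star_dotProduct, dotProduct_comm] using this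

theorem finrank_span_image (s : Finset ι) :
    Module.finrank ℝ (Submodule.span ℝ ((fun j => ⇑(b j)) '' (s : Set ι))) = s.card := by
  have hli : LinearIndependent ℝ fun j : (s : Set ι) => ⇑(b j) :=
    (b.orthonormal.linearIndependent.map' (WithLp.linearEquiv 2 ℝ (n → ℝ)).toLinearMap
      (LinearEquiv.ker _)).comp _ Subtype.val_injective
  rw [Set.image_eq_range, finrank_span_eq_card hli]
  simp

end OrthonormalBasis

section SortedEigenbasis

variable {m : ℕ} {A : Matrix (Fin m) (Fin m) ℝ} (hA : A.IsHermitian)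

theorem eigsDesc_antitone : Antitone (eigsDesc hA) :=
  fun _ _ hij => Tuple.monotone_sort hA.eigenvalues (Fin.rev_le_rev.mpr hij)

noncomputable def eigenbasisDesc : OrthonormalBasis (Fin m) ℝ (EuclideanSpace ℝ (Fin m)) :=
  hA.eigenvectorBasis.reindex (Fin.revPerm.trans (Tuple.sort hA.eigenvalues)).symm

theorem mulVec_eigenbasisDesc (k : Fin m) :
    A *ᵥ ⇑(eigenbasisDesc hA k) = eigsDesc hA k • ⇑(eigenbasisDesc hA k) := by
  simp only [eigenbasisDesc, OrthonormalBasis.reindex_apply, Equiv.symm_symm]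
  exact hA.mulVec_eigenvectorBasis _

theorem exists_finrank_eq_succ_forall_eigsDesc_mul_le (k : Fin m) :
    ∃ W : Submodule ℝ (Fin m → ℝ), Module.finrank ℝ W = k + 1 ∧
      ∀ x ∈ W, eigsDesc hA k * (x ⬝ᵥ x) ≤ x ⬝ᵥ A *ᵥ x := by
  set b := eigenbasisDesc hA
  refine ⟨Submodule.span ℝ ((fun i => ⇑(b i)) '' ↑(Finset.Iic k)), by
    rw [b.finrank_span_image, Fin.card_Iic], fun x hx => ?_⟩
  refine b.le_dotProduct_mulVec (mulVec_eigenbasisDesc hA) fun i hi => eigsDesc_antitone hA ?_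
  by_contra hik
  exact hi (b.dotProduct_eq_zero_of_mem_span (by simpa using hik) hx)

theorem exists_finrank_eq_sub_forall_le_eigsDesc_mul (k : Fin m) :
    ∃ W : Submodule ℝ (Fin m → ℝ), Module.finrank ℝ W = m - k ∧
      ∀ x ∈ W, x ⬝ᵥ A *ᵥ x ≤ eigsDesc hA k * (x ⬝ᵥ x) := by
  set b := eigenbasisDesc hA
  refine ⟨Submodule.span ℝ ((fun i => ⇑(b i)) '' ↑(Finset.Ici k)), by
    rw [b.finrank_span_image, Fin.card_Ici], fun x hx => ?_⟩
  refine b.dotProduct_mulVec_le (mulVec_eigenbasisDesc hA) fun i hi => eigsDesc_antitone hA ?_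
  by_contra hik
  exact hi (b.dotProduct_eq_zero_of_mem_span (by simpa using hik) hx)

theorem eigsDesc_le_of_finrank_le (k : Fin m) {t : ℝ} {V : Submodule ℝ (Fin m → ℝ)}
    (hdim : m - k ≤ Module.finrank ℝ V) (hV : ∀ x ∈ V, x ⬝ᵥ A *ᵥ x ≤ t * (x ⬝ᵥ x)) :
    eigsDesc hA k ≤ t := by
  obtain ⟨W, hW, hWA⟩ := exists_finrank_eq_succ_forall_eigsDesc_mul_le hA k
  obtain ⟨x, hxV, hxW, hx⟩ : ∃ x ∈ V, x ∈ W ∧ x ≠ 0 :=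
    Submodule.exists_mem_inf_ne_zero_of_finrank_lt (by rw [Module.finrank_fin_fun]; omega)
  exact le_of_mul_le_mul_right ((hWA x hxW).trans (hV x hxV)) (dotProduct_self_pos hx)

theorem le_eigsDesc_of_finrank_le (k : Fin m) {t : ℝ} {V : Submodule ℝ (Fin m → ℝ)}
    (hdim : k + 1 ≤ Module.finrank ℝ V) (hV : ∀ x ∈ V, t * (x ⬝ᵥ x) ≤ x ⬝ᵥ A *ᵥ x) :
    t ≤ eigsDesc hA k := by
  obtain ⟨W, hW, hWA⟩ := exists_finrank_eq_sub_forall_le_eigsDesc_mul hA k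
  obtain ⟨x, hxV, hxW, hx⟩ : ∃ x ∈ V, x ∈ W ∧ x ≠ 0 :=
    Submodule.exists_mem_inf_ne_zero_of_finrank_lt (by rw [Module.finrank_fin_fun]; omega)
  exact le_of_mul_le_mul_right ((hV x hxV).trans (hWA x hxW)) (dotProduct_self_pos hx)

theorem dotProduct_mulVec_le_eigsDesc_zero_mul (hm : 0 < m) (x : Fin m → ℝ) :
    x ⬝ᵥ A *ᵥ x ≤ eigsDesc hA ⟨0, hm⟩ * (x ⬝ᵥ x) :=
  (eigenbasisDesc hA).dotProduct_mulVec_le (mulVec_eigenbasisDesc hA) fun _ _ =>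
    eigsDesc_antitone hA (Fin.le_def.mpr (Nat.zero_le _))

theorem eigsDesc_last_mul_le_dotProduct_mulVec (hm : 0 < m) (x : Fin m → ℝ) :
    eigsDesc hA ⟨m - 1, by omega⟩ * (x ⬝ᵥ x) ≤ x ⬝ᵥ A *ᵥ x :=
  (eigenbasisDesc hA).le_dotProduct_mulVec (mulVec_eigenbasisDesc hA) fun i _ =>
    eigsDesc_antitone hA (Fin.le_def.mpr (Nat.le_sub_one_of_lt i.isLt))

end SortedEigenbasis

theorem sq_dotProduct_mulVec_le {m p : ℕ} (hm : 0 < m) (B : Matrix (Fin m) (Fin p) ℝ)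
    (u : Fin m → ℝ) (y : Fin p → ℝ) :
    (u ⬝ᵥ B *ᵥ y) ^ 2 ≤
      eigsDesc (isHermitian_mul_transpose_self B) ⟨0, hm⟩ * (u ⬝ᵥ u) * (y ⬝ᵥ y) := by
  have hcs := real_inner_mul_inner_self_le (WithLp.toLp 2 (Bᵀ *ᵥ u)) (WithLp.toLp 2 y)
  simp only [EuclideanSpace.inner_toLp_toLp, star_trivial] at hcs
  have hBu : (Bᵀ *ᵥ u) ⬝ᵥ (Bᵀ *ᵥ u) = u ⬝ᵥ (B * Bᵀ) *ᵥ u := by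
    rw [← mulVec_mulVec, dotProduct_mulVec u B, mulVec_transpose]
  calc (u ⬝ᵥ B *ᵥ y) ^ 2 = ((Bᵀ *ᵥ u) ⬝ᵥ y) ^ 2 := by rw [dotProduct_mulVec, mulVec_transpose]
    _ ≤ ((Bᵀ *ᵥ u) ⬝ᵥ (Bᵀ *ᵥ u)) * (y ⬝ᵥ y) := by rw [sq, dotProduct_comm]; exact hcs
    _ ≤ _ := by
      rw [hBu]
      exact mul_le_mul_of_nonneg_right (dotProduct_mulVec_le_eigsDesc_zero_mul _ hm u)
        (dotProduct_self_nonneg y)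

theorem eigsDesc_mul_transpose_self_nonneg {m p : ℕ} (B : Matrix (Fin m) (Fin p) ℝ) (k : Fin m) :
    0 ≤ eigsDesc (isHermitian_mul_transpose_self B) k := by
  have h := posSemidef_self_mul_conjTranspose B
  rw [conjTranspose_eq_transpose_of_trivial] at h
  exact h.eigenvalues_nonneg _

theorem sub_div_sub_mul_add_le {a b c α β μ : ℝ} (ha : 0 ≤ a) (hb : 0 ≤ b) (hβ : 0 ≤ β)
    (hμα : μ < α) (hc : c ^ 2 ≤ β * a * b) :
    (μ - β / (α - μ)) * (a + b) ≤ α * a + 2 * c + μ * b := by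
  have hδ : 0 < α - μ := sub_pos.mpr hμα
  have hamgm : 2 * |c| ≤ (α - μ) * a + β / (α - μ) * b :=
    two_mul_abs_le_add_of_sq_le_mul (by positivity) (by positivity) <| by
      rw [mul_mul_mul_comm, mul_div_cancel₀ _ hδ.ne', ← mul_assoc]; exact hc
  have : 0 ≤ β / (α - μ) * a := by positivity
  linarith [neg_abs_le c]

section Blocks

variable {r1 r2 : ℕ}

noncomputable def blockEquiv : ((Fin r1 → ℝ) × (Fin r2 → ℝ)) ≃ₗ[ℝ] (Fin (r1 + r2) → ℝ) :=
  (LinearEquiv.sumArrowLequivProdArrow _ _ ℝ ℝ).symm.trans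
    (LinearEquiv.funCongrLeft ℝ ℝ finSumFinEquiv.symm)

theorem blockEquiv_apply (p : (Fin r1 → ℝ) × (Fin r2 → ℝ)) :
    blockEquiv p = Sum.elim p.1 p.2 ∘ finSumFinEquiv.symm :=
  rfl

theorem blockEquiv_dotProduct_blockEquiv (p q : (Fin r1 → ℝ) × (Fin r2 → ℝ)) :
    blockEquiv p ⬝ᵥ blockEquiv q = p.1 ⬝ᵥ q.1 + p.2 ⬝ᵥ q.2 := by
  rw [blockEquiv_apply, blockEquiv_apply, comp_equiv_dotProduct_comp_equiv,
    sumElim_dotProduct_sumElim]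

theorem blockEquiv_dotProduct_mulVec_fromBlocks (A : Matrix (Fin r1) (Fin r1) ℝ)
    (B : Matrix (Fin r1) (Fin r2) ℝ) (C : Matrix (Fin r2) (Fin r1) ℝ)
    (D : Matrix (Fin r2) (Fin r2) ℝ) (p : (Fin r1 → ℝ) × (Fin r2 → ℝ)) :
    blockEquiv p ⬝ᵥ reindex finSumFinEquiv finSumFinEquiv (fromBlocks A B C D) *ᵥ blockEquiv p =
      p.1 ⬝ᵥ A *ᵥ p.1 + p.1 ⬝ᵥ B *ᵥ p.2 + p.2 ⬝ᵥ C *ᵥ p.1 + p.2 ⬝ᵥ D *ᵥ p.2 := by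
  rw [blockEquiv_apply, reindex_apply, submatrix_mulVec_equiv, Equiv.symm_symm,
    Function.comp_assoc, Equiv.symm_comp_self, Function.comp_id, comp_equiv_dotProduct_comp_equiv,
    fromBlocks_mulVec, sumElim_dotProduct_sumElim, Sum.elim_comp_inl, Sum.elim_comp_inr,
    dotProduct_add, dotProduct_add]
  ring

end Blocks

section FromBlocks

variable {r1 r2 : ℕ} {A : Matrix (Fin r1) (Fin r1) ℝ} {D : Matrix (Fin r2) (Fin r2) ℝ}

theorem eigsDesc_fromBlocks_le {B : Matrix (Fin r1) (Fin r2) ℝ} {C : Matrix (Fin r2) (Fin r1) ℝ}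
    (hD : D.IsHermitian)
    (hM : (reindex finSumFinEquiv finSumFinEquiv (fromBlocks A B C D)).IsHermitian)
    (j : Fin r2) : eigsDesc hM ⟨r1 + j, by omega⟩ ≤ eigsDesc hD j := by
  obtain ⟨W, hW, hWD⟩ := exists_finrank_eq_sub_forall_le_eigsDesc_mul hD j
  let f := (blockEquiv (r1 := r1)).toLinearMap ∘ₗ LinearMap.inr ℝ _ _ ∘ₗ W.subtype
  have hf : Function.Injective f :=
    blockEquiv.injective.comp (LinearMap.inr_injective.comp W.injective_subtype)
  refine eigsDesc_le_of_finrank_le hM _ (V := LinearMap.range f) ?_ ?_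
  · rw [LinearMap.finrank_range_of_inj hf, hW, Fin.val_mk]
    omega
  · rintro _ ⟨y, rfl⟩
    change blockEquiv (0, (y : Fin r2 → ℝ)) ⬝ᵥ _ *ᵥ blockEquiv (0, (y : Fin r2 → ℝ)) ≤
      _ * (blockEquiv (0, (y : Fin r2 → ℝ)) ⬝ᵥ blockEquiv (0, (y : Fin r2 → ℝ)))
    rw [blockEquiv_dotProduct_mulVec_fromBlocks, blockEquiv_dotProduct_blockEquiv]
    simpa using hWD y y.2

theorem sub_div_le_eigsDesc_fromBlocks (hr1 : 0 < r1) (hA : A.IsHermitian)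
    (B : Matrix (Fin r1) (Fin r2) ℝ) (hD : D.IsHermitian)
    (hM : (reindex finSumFinEquiv finSumFinEquiv (fromBlocks A B Bᵀ D)).IsHermitian)
    (j : Fin r2) (hgap : eigsDesc hD j < eigsDesc hA ⟨r1 - 1, by omega⟩) :
    eigsDesc hD j - eigsDesc (isHermitian_mul_transpose_self B) ⟨0, hr1⟩ /
        (eigsDesc hA ⟨r1 - 1, by omega⟩ - eigsDesc hD j) ≤
      eigsDesc hM ⟨r1 + j, by omega⟩ := by
  obtain ⟨W, hW, hWD⟩ := exists_finrank_eq_succ_forall_eigsDesc_mul_le hD j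
  let f := (blockEquiv (r1 := r1)).toLinearMap ∘ₗ LinearMap.prodMap LinearMap.id W.subtype
  have hf : Function.Injective f :=
    blockEquiv.injective.comp (Prod.map_injective.mpr ⟨Function.injective_id, W.injective_subtype⟩)
  refine le_eigsDesc_of_finrank_le hM _ (V := LinearMap.range f) ?_ ?_
  · rw [LinearMap.finrank_range_of_inj hf, Module.finrank_prod, hW]
    simp
  · rintro _ ⟨⟨u, y⟩, rfl⟩
    change _ * (blockEquiv (u, (y : Fin r2 → ℝ)) ⬝ᵥ blockEquiv (u, (y : Fin r2 → ℝ))) ≤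
      blockEquiv (u, (y : Fin r2 → ℝ)) ⬝ᵥ _ *ᵥ blockEquiv (u, (y : Fin r2 → ℝ))
    have hcross : (y : Fin r2 → ℝ) ⬝ᵥ Bᵀ *ᵥ u = u ⬝ᵥ B *ᵥ y := by
      rw [dotProduct_mulVec, vecMul_transpose, dotProduct_comm]
    rw [blockEquiv_dotProduct_mulVec_fromBlocks, blockEquiv_dotProduct_blockEquiv, hcross]
    have hform := sub_div_sub_mul_add_le (dotProduct_self_nonneg u) (dotProduct_self_nonneg _)
      (eigsDesc_mul_transpose_self_nonneg B _) hgap (sq_dotProduct_mulVec_le hr1 B u y)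
    linarith [eigsDesc_last_mul_le_dotProduct_mulVec hA hr1 u, hWD y y.2]

end FromBlocks

/-- Eigenvalue bounds for the `(r1+r2) × (r1+r2)` Gram block matrix
`M = [[M1 M1ᵀ, M1 M2ᵀ], [M2 M1ᵀ, M2 M2ᵀ]]` when `λ_{r1}(M1 M1ᵀ) > λ_1(M2 M2ᵀ)`:
for `1 ≤ j ≤ r2` (here `j : Fin r2` is 0-based, so `eigsDesc · j` is `λ_{j+1}`),
`λ_j(M2 M2ᵀ) − λ_1((M1 M2ᵀ)(M1 M2ᵀ)ᵀ) / (λ_{r1}(M1 M1ᵀ) − λ_j(M2 M2ᵀ))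
  ≤ λ_{r1+j}(M) ≤ λ_j(M2 M2ᵀ)`. -/
theorem gram_block_eigenvalue_bounds {n r1 r2 : ℕ} (hr1 : 0 < r1) (hr2 : 0 < r2)
    (M1 : Matrix (Fin r1) (Fin n) ℝ) (M2 : Matrix (Fin r2) (Fin n) ℝ)
    (M : Matrix (Fin (r1 + r2)) (Fin (r1 + r2)) ℝ)
    (hMdef : M = (Matrix.reindex finSumFinEquiv finSumFinEquiv)
        (Matrix.fromBlocks (M1 * M1ᵀ) (M1 * M2ᵀ) (M2 * M1ᵀ) (M2 * M2ᵀ)))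
    (hM : M.IsHermitian)
    (hgap : eigsDesc (isHermitian_mul_transpose_self M1) ⟨r1 - 1, by omega⟩ >
        eigsDesc (isHermitian_mul_transpose_self M2) ⟨0, hr2⟩) :
    ∀ j : Fin r2,
      eigsDesc (isHermitian_mul_transpose_self M2) j -
          eigsDesc (isHermitian_mul_transpose_self (M1 * M2ᵀ)) ⟨0, hr1⟩ /
            (eigsDesc (isHermitian_mul_transpose_self M1) ⟨r1 - 1, by omega⟩ -
              eigsDesc (isHermitian_mul_transpose_self M2) j) ≤
        eigsDesc hM ⟨r1 + j.val, by have := j.2; omega⟩ ∧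
      eigsDesc hM ⟨r1 + j.val, by have := j.2; omega⟩ ≤
        eigsDesc (isHermitian_mul_transpose_self M2) j := by
  intro j
  have hC : M2 * M1ᵀ = (M1 * M2ᵀ)ᵀ := by rw [transpose_mul, transpose_transpose]
  rw [hC] at hMdef
  subst hMdef
  have hgap_j : eigsDesc (isHermitian_mul_transpose_self M2) j <
      eigsDesc (isHermitian_mul_transpose_self M1) ⟨r1 - 1, by omega⟩ :=
    (eigsDesc_antitone _ (Fin.le_def.mpr (Nat.zero_le _))).trans_lt hgap
  exact ⟨sub_div_le_eigsDesc_fromBlocks hr1 _ _ _ hM j hgap_j, eigsDesc_fromBlocks_le _ hM j⟩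
end
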